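/- arXiv:2003.02158 — 2 statements merged into one kernel-verified Lean document; each statement's English description precedes it below -/
import Mathlib

section
/- Let Y be an adapted process with Y_0 = 1 and let 𝒳 be a family of nonnegative adapted processes such that for each X ∈ 𝒳, X·Y is a supermartingale with X_0 Y_0 = 1, and {Y_t = 0} ⊆ {X_t = 0} a.s. for all t and all X ∈ 𝒳. Then for each fixed t ∈ [0,∞), the family { X_t : X ∈ 𝒳 } is bounded in L⁰, i.e. sup_{X∈𝒳} P[ X_t > M ] → 0 as M → ∞. -/
/-!
Markov's inequality bounds the upper tails of the products `X t * Y t` uniformly in `X`, since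
their expectations are at most `E[X 0 * Y 0] = 1`. Off `{Y t = 0}`, where `X t` vanishes,
`X t = (X t * Y t) * (Y t)⁻¹`, and multiplying a family with uniformly small tails by a single
real random variable keeps the tails uniformly small.
-/

open MeasureTheory Filter Set
open scoped NNReal ENNReal Topology

theorem sqrt_lt_or_sqrt_lt_of_lt_mul {a b M : ℝ} (hM : 0 ≤ M) (ha : 0 ≤ a)
    (hab : M < a * b) : √M < a ∨ √M < b := by
  by_contra! h
  have : a * b ≤ M := calc
    a * b ≤ a * √M := mul_le_mul_of_nonneg_left h.2 ha
    _ ≤ √M * √M := mul_le_mul_of_nonneg_right h.1 (Real.sqrt_nonneg M)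
    _ = M := Real.mul_self_sqrt hM
  exact this.not_gt hab

namespace MeasureTheory

variable {Ω ι : Type*} {m0 : MeasurableSpace Ω} {μ : Measure Ω}

/-- Only upper tails are controlled: for families of nonnegative functions this is boundedness
in `L⁰`. -/
def BoundedInL0 (μ : Measure Ω) (s : Set ι) (f : ι → Ω → ℝ) : Prop :=
  Tendsto (fun M : ℝ => ⨆ i ∈ s, μ {ω | M < f i ω}) atTop (𝓝 0)

theorem measure_le_le_ofReal_integral_div [IsFiniteMeasure μ] {f : Ω → ℝ} (hf : 0 ≤ᵐ[μ] f)
    (hint : Integrable f μ) {c : ℝ} (hc : 0 < c) :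
    μ {ω | c ≤ f ω} ≤ ENNReal.ofReal ((∫ ω, f ω ∂μ) / c) := by
  rw [← ofReal_measureReal]
  refine ENNReal.ofReal_le_ofReal ?_
  rw [le_div_iff₀ hc, mul_comm]
  exact mul_meas_ge_le_integral_of_nonneg hf hint c

theorem tendsto_measure_lt_atTop [IsFiniteMeasure μ] {h : Ω → ℝ} (hh : AEMeasurable h μ) :
    Tendsto (fun M : ℝ => μ {ω | M < h ω}) atTop (𝓝 0) := by
  have hanti : Antitone fun M : ℝ => {ω | M < h ω} := fun a b hab ω hω => hab.trans_lt hω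
  have hempty : (⋂ M : ℝ, {ω | M < h ω}) = ∅ :=
    eq_empty_of_forall_notMem fun ω hω => lt_irrefl (h ω) (mem_iInter.mp hω (h ω))
  have := tendsto_measure_iInter_atTop (μ := μ) (s := fun M : ℝ => {ω | M < h ω})
    (fun M => hh.nullMeasurable measurableSet_Ioi) hanti ⟨0, measure_ne_top μ _⟩
  rwa [hempty, measure_empty] at this

theorem boundedInL0_of_integral_le [IsFiniteMeasure μ] {s : Set ι} {f : ι → Ω → ℝ} {C : ℝ}
    (hnn : ∀ i ∈ s, 0 ≤ᵐ[μ] f i) (hint : ∀ i ∈ s, Integrable (f i) μ)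
    (hC : ∀ i ∈ s, ∫ ω, f i ω ∂μ ≤ C) : BoundedInL0 μ s f := by
  have hlim : Tendsto (fun M : ℝ => ENNReal.ofReal (C / M)) atTop (𝓝 0) := by
    simpa using ENNReal.tendsto_ofReal (tendsto_const_nhds.div_atTop tendsto_id)
  refine tendsto_of_tendsto_of_tendsto_of_le_of_le' tendsto_const_nhds hlim
    (Eventually.of_forall fun _ => zero_le) ?_
  filter_upwards [eventually_gt_atTop 0] with M hM
  refine iSup₂_le fun i hi => ?_
  calc μ {ω | M < f i ω} ≤ μ {ω | M ≤ f i ω} := measure_mono fun ω (hω : M < f i ω) => hω.le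
    _ ≤ ENNReal.ofReal ((∫ ω, f i ω ∂μ) / M) :=
      measure_le_le_ofReal_integral_div (hnn i hi) (hint i hi) hM
    _ ≤ ENNReal.ofReal (C / M) := ENNReal.ofReal_le_ofReal (by gcongr; exact hC i hi)

theorem BoundedInL0.mono_ae {s : Set ι} {f g : ι → Ω → ℝ} (hf : BoundedInL0 μ s f)
    (hle : ∀ i ∈ s, g i ≤ᵐ[μ] f i) : BoundedInL0 μ s g :=
  tendsto_of_tendsto_of_tendsto_of_le_of_le tendsto_const_nhds hf (fun _ => zero_le)
    fun M => iSup₂_mono fun i hi => measure_mono_ae <|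
      (hle i hi).mono fun ω hω (hM : M < g i ω) => hM.trans_le hω

theorem BoundedInL0.mul [IsFiniteMeasure μ] {s : Set ι} {f : ι → Ω → ℝ} {h : Ω → ℝ}
    (hf : BoundedInL0 μ s f) (hnn : ∀ i ∈ s, 0 ≤ᵐ[μ] f i) (hh : AEMeasurable h μ) :
    BoundedInL0 μ s fun i ω => f i ω * h ω := by
  have hlim : Tendsto (fun M : ℝ => (⨆ i ∈ s, μ {ω | √M < f i ω}) + μ {ω | √M < h ω})
      atTop (𝓝 0) := by
    simpa using (hf.comp Real.tendsto_sqrt_atTop).add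
      ((tendsto_measure_lt_atTop hh).comp Real.tendsto_sqrt_atTop)
  refine tendsto_of_tendsto_of_tendsto_of_le_of_le' tendsto_const_nhds hlim
    (Eventually.of_forall fun _ => zero_le) ?_
  filter_upwards [eventually_ge_atTop 0] with M hM
  refine iSup₂_le fun i hi => ?_
  calc μ {ω | M < f i ω * h ω} ≤ μ ({ω | √M < f i ω} ∪ {ω | √M < h ω}) :=
        measure_mono_ae <| (hnn i hi).mono fun ω hω hlt =>
          sqrt_lt_or_sqrt_lt_of_lt_mul hM hω hlt
    _ ≤ μ {ω | √M < f i ω} + μ {ω | √M < h ω} := measure_union_le _ _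
    _ ≤ (⨆ i ∈ s, μ {ω | √M < f i ω}) + μ {ω | √M < h ω} := by
        gcongr; exact le_iSup₂ (f := fun i _ => μ {ω | √M < f i ω}) i hi

theorem Supermartingale.integral_le {κ : Type*} [Preorder κ] {ℱ : Filtration κ m0}
    [SigmaFiniteFiltration μ ℱ] {f : κ → Ω → ℝ} (hf : Supermartingale f ℱ μ) {i j : κ}
    (hij : i ≤ j) : ∫ ω, f j ω ∂μ ≤ ∫ ω, f i ω ∂μ := by
  simpa using hf.setIntegral_le hij MeasurableSet.univ

end MeasureTheory

theorem boundedInL0_of_deflator_general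
    {Ω : Type*} {m0 : MeasurableSpace Ω} (μ : Measure Ω) [IsProbabilityMeasure μ]
    (ℱ : Filtration ℝ≥0 m0) (Y : ℝ≥0 → Ω → ℝ)
    (hYadapted : Adapted ℱ Y) (hYpos : ∀ t, 0 ≤ᵐ[μ] Y t)
    (𝒳 : Set (ℝ≥0 → Ω → ℝ))
    (hXpos : ∀ X ∈ 𝒳, ∀ t ω, 0 ≤ X t ω)
    (hsup : ∀ X ∈ 𝒳, Supermartingale (fun t ω => X t ω * Y t ω) ℱ μ)
    (hone : ∀ X ∈ 𝒳, ∀ᵐ ω ∂μ, X 0 ω * Y 0 ω = 1)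
    (hzero : ∀ X ∈ 𝒳, ∀ t, ∀ᵐ ω ∂μ, Y t ω = 0 → X t ω = 0) :
    ∀ t : ℝ≥0, Tendsto (fun M : ℝ => ⨆ X ∈ 𝒳, μ {ω | M < X t ω}) atTop (𝓝 0) := by
  intro t
  have hXYnn : ∀ X ∈ 𝒳, 0 ≤ᵐ[μ] fun ω => X t ω * Y t ω := fun X hX =>
    (hYpos t).mono fun ω hω => mul_nonneg (hXpos X hX t ω) hω
  have hXYint : ∀ X ∈ 𝒳, ∫ ω, X t ω * Y t ω ∂μ ≤ 1 := fun X hX => by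
    simpa [integral_congr_ae (hone X hX)] using (hsup X hX).integral_le zero_le
  have hXY : BoundedInL0 μ 𝒳 fun X ω => X t ω * Y t ω :=
    boundedInL0_of_integral_le hXYnn (fun X hX => (hsup X hX).integrable t) hXYint
  have hYt : AEMeasurable (Y t) μ := ((hYadapted t).mono (ℱ.le t) le_rfl).aemeasurable
  refine (hXY.mul hXYnn hYt.inv).mono_ae fun X hX => ?_
  filter_upwards [hzero X hX t] with ω hω
  show X t ω ≤ X t ω * Y t ω * (Y t ω)⁻¹
  -- on `{Y t = 0}` both sides vanish, the right one because `0⁻¹ = 0`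
  rcases eq_or_ne (Y t ω) 0 with h0 | h0
  · simp [h0, hω h0]
  · rw [mul_inv_cancel_right₀ h0]

theorem boundedInL0_of_deflator
    {Ω : Type*} {m0 : MeasurableSpace Ω} (μ : Measure Ω) [IsProbabilityMeasure μ]
    (ℱ : Filtration ℝ≥0 m0) (Y : ℝ≥0 → Ω → ℝ)
    (hYadapted : Adapted ℱ Y) (hY0 : ∀ ω, Y 0 ω = 1) (hYpos : ∀ t, 0 ≤ᵐ[μ] Y t)
    (𝒳 : Set (ℝ≥0 → Ω → ℝ))
    (hXadapted : ∀ X ∈ 𝒳, Adapted ℱ X)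
    (hXpos : ∀ X ∈ 𝒳, ∀ t ω, 0 ≤ X t ω)
    (hsup : ∀ X ∈ 𝒳, Supermartingale (fun t ω => X t ω * Y t ω) ℱ μ)
    (hone : ∀ X ∈ 𝒳, ∀ᵐ ω ∂μ, X 0 ω * Y 0 ω = 1)
    (hzero : ∀ X ∈ 𝒳, ∀ t, ∀ᵐ ω ∂μ, Y t ω = 0 → X t ω = 0) :
    ∀ t : ℝ≥0, Tendsto (fun M : ℝ => ⨆ X ∈ 𝒳, μ {ω | M < X t ω}) atTop (𝓝 0) :=
  boundedInL0_of_deflator_general μ ℱ Y hYadapted hYpos 𝒳 hXpos hsup hone hzero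
end

section
/- Let Y be a nonnegative supermartingale on [0,∞) and X a nonnegative process such that X·Y is a right-continuous supermartingale with X_0 Y_0 = 1. Suppose for some δ > 0 and every N ∈ ℕ there exists such a process X^N with P[ liminf_{t→∞} X^N_t Y_t > N ] > δ. Then for N > 1/δ this yields a contradiction; hence the family { liminf_{t→∞} X_t Y_t : X such that XY is a supermartingale with X_0 Y_0 = 1, XY right-continuous, X, Y ≥ 0 } is bounded in L⁰. -/
open MeasureTheory Filter Set
open scoped NNReal ENNReal

/-! Fatou's lemma along integer times bounds `E[liminf_n X_n Y_n]` by `E[X_0 Y_0] = 1`, and the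
liminf over continuous time is at most the one over integer times; Markov's inequality then
gives `P[liminf_t X_t Y_t > N] ≤ 1/N`, which is below `δ` for large `N`. -/

namespace MeasureTheory.Supermartingale

variable {Ω : Type*} {m0 : MeasurableSpace Ω} {μ : Measure Ω} [IsFiniteMeasure μ]

theorem lintegral_ofReal_le {ι : Type*} [Preorder ι] {ℱ : Filtration ι m0} {f : ι → Ω → ℝ}
    (hf : Supermartingale f ℱ μ) (hf_nonneg : ∀ i ω, 0 ≤ f i ω) {i j : ι} (hij : i ≤ j) :
    ∫⁻ ω, ENNReal.ofReal (f j ω) ∂μ ≤ ∫⁻ ω, ENNReal.ofReal (f i ω) ∂μ := by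
  rw [← ofReal_integral_eq_lintegral_ofReal (hf.integrable j) (ae_of_all _ (hf_nonneg j)),
    ← ofReal_integral_eq_lintegral_ofReal (hf.integrable i) (ae_of_all _ (hf_nonneg i))]
  refine ENNReal.ofReal_le_ofReal ?_
  simpa using hf.setIntegral_le hij MeasurableSet.univ

variable {ℱ : Filtration ℝ≥0 m0} {f : ℝ≥0 → Ω → ℝ}

theorem lintegral_liminf_natCast_le (hf : Supermartingale f ℱ μ)
    (hf_nonneg : ∀ t ω, 0 ≤ f t ω) :
    ∫⁻ ω, liminf (fun n : ℕ => ENNReal.ofReal (f n ω)) atTop ∂μ ≤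
      ∫⁻ ω, ENNReal.ofReal (f 0 ω) ∂μ :=
  calc ∫⁻ ω, liminf (fun n : ℕ => ENNReal.ofReal (f n ω)) atTop ∂μ
      ≤ liminf (fun n : ℕ => ∫⁻ ω, ENNReal.ofReal (f n ω) ∂μ) atTop :=
        lintegral_liminf_le fun n =>
          ((hf.stronglyMeasurable n).measurable.mono (ℱ.le n) le_rfl).ennreal_ofReal
    _ ≤ ∫⁻ ω, ENNReal.ofReal (f 0 ω) ∂μ :=
        liminf_le_of_frequently_le' <| Frequently.of_forall fun _ =>
          hf.lintegral_ofReal_le hf_nonneg zero_le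

theorem measure_lt_liminf_le (hf : Supermartingale f ℱ μ) (hf_nonneg : ∀ t ω, 0 ≤ f t ω)
    {c : ℝ≥0∞} (hc : c ≠ 0) (hc_top : c ≠ ∞) :
    μ {ω | c < liminf (fun t : ℝ≥0 => ENNReal.ofReal (f t ω)) atTop} ≤
      (∫⁻ ω, ENNReal.ofReal (f 0 ω) ∂μ) / c := by
  -- The liminf over the uncountable time set need not be measurable: pass to integer times.
  set g : Ω → ℝ≥0∞ := fun ω => liminf (fun n : ℕ => ENNReal.ofReal (f n ω)) atTop
  have hg : Measurable g := Measurable.liminf fun n =>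
    ((hf.stronglyMeasurable n).measurable.mono (ℱ.le n) le_rfl).ennreal_ofReal
  calc μ {ω | c < liminf (fun t : ℝ≥0 => ENNReal.ofReal (f t ω)) atTop}
      ≤ μ {ω | c ≤ g ω} := measure_mono fun ω hω =>
        hω.le.trans <| tendsto_natCast_atTop_atTop.liminf_le_liminf_comp
          (u := fun t => ENNReal.ofReal (f t ω))
    _ ≤ (∫⁻ ω, g ω ∂μ) / c := meas_ge_le_lintegral_div hg.aemeasurable hc hc_top
    _ ≤ (∫⁻ ω, ENNReal.ofReal (f 0 ω) ∂μ) / c :=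
        ENNReal.div_le_div_right (hf.lintegral_liminf_natCast_le hf_nonneg) c

end MeasureTheory.Supermartingale

theorem no_unbounded_liminf_profit_general
    {Ω : Type*} {m0 : MeasurableSpace Ω} (μ : Measure Ω) [IsProbabilityMeasure μ]
    (ℱ : Filtration ℝ≥0 m0) (Y : ℝ≥0 → Ω → ℝ)
    (hYpos : ∀ t ω, 0 ≤ Y t ω) :
    ¬ ∃ δ : ℝ, 0 < δ ∧ ∀ N : ℕ, ∃ X : ℝ≥0 → Ω → ℝ,
      (∀ t ω, 0 ≤ X t ω) ∧
      (∀ ω (t : ℝ≥0), ContinuousWithinAt (fun s => X s ω * Y s ω) (Ici t) t) ∧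
      Supermartingale (fun t ω => X t ω * Y t ω) ℱ μ ∧
      (∀ ω, X 0 ω * Y 0 ω = 1) ∧
      ENNReal.ofReal δ <
        μ {ω | (N : ℝ≥0∞) < liminf (fun t : ℝ≥0 => ENNReal.ofReal (X t ω * Y t ω)) atTop} := by
  rintro ⟨δ, hδ, h⟩
  obtain ⟨N, hN⟩ := ENNReal.exists_inv_nat_lt (ENNReal.ofReal_pos.2 hδ).ne'
  have hN0 : (N : ℝ≥0∞) ≠ 0 := fun h0 => by simp [h0] at hN
  obtain ⟨X, hX, -, hXY, hXY0, hμ⟩ := h N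
  have hmarkov := hXY.measure_lt_liminf_le (fun t ω => mul_nonneg (hX t ω) (hYpos t ω))
    hN0 (ENNReal.natCast_ne_top N)
  simp only [hXY0, ENNReal.ofReal_one, lintegral_const, measure_univ, one_mul,
    one_div] at hmarkov
  exact lt_irrefl _ ((hμ.trans_le hmarkov).trans hN)

theorem no_unbounded_liminf_profit
    {Ω : Type*} {m0 : MeasurableSpace Ω} (μ : Measure Ω) [IsProbabilityMeasure μ]
    (ℱ : Filtration ℝ≥0 m0) (Y : ℝ≥0 → Ω → ℝ)
    (hY : Supermartingale Y ℱ μ) (hYpos : ∀ t ω, 0 ≤ Y t ω) :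
    ¬ ∃ δ : ℝ, 0 < δ ∧ ∀ N : ℕ, ∃ X : ℝ≥0 → Ω → ℝ,
      (∀ t ω, 0 ≤ X t ω) ∧
      (∀ ω (t : ℝ≥0), ContinuousWithinAt (fun s => X s ω * Y s ω) (Ici t) t) ∧
      Supermartingale (fun t ω => X t ω * Y t ω) ℱ μ ∧
      (∀ ω, X 0 ω * Y 0 ω = 1) ∧
      ENNReal.ofReal δ <
        μ {ω | (N : ℝ≥0∞) < liminf (fun t : ℝ≥0 => ENNReal.ofReal (X t ω * Y t ω)) atTop} :=
  no_unbounded_liminf_profit_general μ ℱ Y hYpos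
end
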